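/- arXiv:2501.17378 — 2 statements merged into one kernel-verified Lean document; each statement's English description precedes it below -/
import Mathlib

section
/- Let (X, B, θ) be a probability space, ξ a countable partition with H(θ, ξ) < ∞, and F₁ ⊆ F₂ ⊆ … an increasing sequence of sub-σ-algebras with F_n ↑ F. Then sup_n I(θ, ξ | F_n) ∈ L¹(θ), and I(θ, ξ | F_n) converges θ-a.e. and in L¹ to I(θ, ξ | F); in particular, lim_n H(θ, ξ | F_n) = H(θ, ξ | F). -/
open MeasureTheory Filter Topology
open scoped ENNReal NNReal
set_option maxHeartbeats 1000000

/-- The conditional information of a countable partition `ξ` given a sub-σ-algebra `F`: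
`I(θ, ξ | F) = Σ_{A ∈ ξ} −1_A log E(θ, 1_A | F)`. -/
noncomputable def infoCond {X : Type*} (m : MeasurableSpace X)
    (θ : @MeasureTheory.Measure X m)
    {ι : Type*} (ξ : ι → Set X) (F : MeasurableSpace X) (x : X) : ℝ :=
  ∑' i : ι, (ξ i).indicator (fun _ => (1 : ℝ)) x *
    (-Real.log ((MeasureTheory.condExp F θ ((ξ i).indicator fun _ => (1 : ℝ))) x))

lemma series_bound (p : ℝ) (hp0 : 0 < p) (hp1 : p ≤ 1) :
    ∑' k : ℕ, min p (Real.exp (-(k : ℝ))) ≤ Real.negMulLog p + 3 * p := by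
  have hgeom : ∀ k : ℕ, Real.exp (-(k : ℝ)) = (Real.exp (-1)) ^ k := by
    intro k
    rw [← Real.exp_nat_mul]; ring_nf
  have he1 : Real.exp (-1) < 1 := Real.exp_lt_one_iff.mpr (by norm_num)
  have he0 : 0 < Real.exp (-1) := Real.exp_pos _
  have hsum_exp : Summable (fun k : ℕ => Real.exp (-(k : ℝ))) := by
    simp_rw [hgeom]
    exact summable_geometric_of_lt_one he0.le he1
  have hsum : Summable (fun k : ℕ => min p (Real.exp (-(k : ℝ)))) :=
    Summable.of_nonneg_of_le (fun k => le_min hp0.le (Real.exp_pos _).le)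
      (fun k => min_le_right _ _) hsum_exp
  set K : ℕ := ⌈-Real.log p⌉₊ with hK
  have hlogp : 0 ≤ -Real.log p := by
    have := Real.log_nonpos hp0.le hp1; linarith
  have hK1 : (K : ℝ) ≤ -Real.log p + 1 := (Nat.ceil_lt_add_one hlogp).le
  have hK2 : -Real.log p ≤ (K : ℝ) := Nat.le_ceil _
  have hexpK : Real.exp (-(K : ℝ)) ≤ p := by
    have : Real.exp (-(K : ℝ)) ≤ Real.exp (Real.log p) := Real.exp_le_exp.2 (by linarith)
    rwa [Real.exp_log hp0] at this
  have hsplit := Summable.sum_add_tsum_nat_add (k := K) hsum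
  have hhead : ∑ k ∈ Finset.range K, min p (Real.exp (-(k : ℝ))) ≤ Real.negMulLog p + p := by
    calc ∑ k ∈ Finset.range K, min p (Real.exp (-(k : ℝ)))
        ≤ ∑ k ∈ Finset.range K, p := Finset.sum_le_sum fun k _ => min_le_left _ _
      _ = (K : ℝ) * p := by rw [Finset.sum_const, Finset.card_range]; ring
      _ ≤ (-Real.log p + 1) * p := by nlinarith
      _ = Real.negMulLog p + p := by rw [Real.negMulLog]; ring
  have htail : ∑' j : ℕ, min p (Real.exp (-((j + K : ℕ) : ℝ))) ≤ 2 * p := by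
    have hle : ∀ j : ℕ, min p (Real.exp (-((j + K : ℕ) : ℝ)))
        ≤ Real.exp (-(K : ℝ)) * (Real.exp (-1)) ^ j := by
      intro j
      have : Real.exp (-((j + K : ℕ) : ℝ)) = Real.exp (-(K : ℝ)) * (Real.exp (-1)) ^ j := by
        rw [← hgeom j, ← Real.exp_add]; push_cast; ring_nf
      rw [← this]; exact min_le_right _ _
    have hsum2 : Summable (fun j : ℕ => Real.exp (-(K : ℝ)) * (Real.exp (-1)) ^ j) :=
      (summable_geometric_of_lt_one he0.le he1).mul_left _
    calc ∑' j : ℕ, min p (Real.exp (-((j + K : ℕ) : ℝ)))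
        ≤ ∑' j : ℕ, Real.exp (-(K : ℝ)) * (Real.exp (-1)) ^ j := by
          refine Summable.tsum_le_tsum hle ?_ hsum2
          exact (summable_nat_add_iff K).mpr hsum
      _ = Real.exp (-(K : ℝ)) * (1 - Real.exp (-1))⁻¹ := by
          rw [tsum_mul_left, tsum_geometric_of_lt_one he0.le he1]
      _ ≤ 2 * p := by
          have h2 : Real.exp (-1) < 1/2 := by
            have h := Real.exp_one_gt_d9
            rw [Real.exp_neg, inv_lt_comm₀ (by positivity) (by norm_num)]
            nlinarith
          have h3 : (1 - Real.exp (-1))⁻¹ ≤ 2 := by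
            rw [inv_le_comm₀ (by nlinarith) (by norm_num)]
            nlinarith
          nlinarith [Real.exp_pos (-(K:ℝ))]
  have : ∑' k : ℕ, min p (Real.exp (-(k : ℝ)))
      = (∑ k ∈ Finset.range K, min p (Real.exp (-(k : ℝ))))
        + ∑' j : ℕ, min p (Real.exp (-((j + K : ℕ) : ℝ))) := by
    rw [← hsplit]
  rw [this]; linarith

lemma le_tsum_levels (a : ℝ≥0∞) : a ≤ ∑' k : ℕ, if (k : ℝ≥0∞) < a then 1 else 0 := by
  refine ENNReal.le_of_forall_nnreal_lt ?_
  intro r hr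
  have hN : ∀ k ∈ Finset.range (⌊r⌋₊ + 1), (if (k : ℝ≥0∞) < a then (1:ℝ≥0∞) else 0) = 1 := by
    intro k hk
    rw [Finset.mem_range] at hk
    have hk' : (k : ℝ≥0) ≤ r := by
      calc (k : ℝ≥0) ≤ (⌊r⌋₊ : ℝ≥0) := by exact_mod_cast Nat.lt_succ_iff.mp hk
        _ ≤ r := Nat.floor_le zero_le
    have : (k : ℝ≥0∞) < a := lt_of_le_of_lt (by exact_mod_cast hk') hr
    simp [this]
  calc (r : ℝ≥0∞) ≤ ((⌊r⌋₊ + 1 : ℕ) : ℝ≥0∞) := by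
        have : r ≤ ((⌊r⌋₊ + 1 : ℕ) : ℝ≥0) := by exact_mod_cast (Nat.lt_floor_add_one r).le
        exact_mod_cast this
    _ = ∑ k ∈ Finset.range (⌊r⌋₊ + 1), (if (k : ℝ≥0∞) < a then (1:ℝ≥0∞) else 0) := by
        rw [Finset.sum_congr rfl hN]; simp
    _ ≤ ∑' k : ℕ, if (k : ℝ≥0∞) < a then 1 else 0 := ENNReal.sum_le_tsum _

lemma maximal_ineq {X : Type*} [m0 : MeasurableSpace X] (θ : Measure X) [IsProbabilityMeasure θ]
    (A : Set X) (hA : MeasurableSet A)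
    (F : ℕ → MeasurableSpace X) (hFmono : Monotone F) (hFle : ∀ n, F n ≤ m0)
    (t : ℝ) (ht : 0 < t) :
    θ (A ∩ {x | ∃ n, condExp (F n) θ (A.indicator fun _ => (1:ℝ)) x < t})
      ≤ ENNReal.ofReal t := by
  set g : X → ℝ := A.indicator fun _ => (1:ℝ) with hgdef
  have hg : Integrable g θ := (integrable_const 1).indicator hA
  set f : ℕ → X → ℝ := fun n => condExp (F n) θ g with hfdef
  set s : ℕ → Set X := fun n => {x | f n x < t} with hsdef
  have hs_meas : ∀ n, MeasurableSet[F n] (s n) := by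
    intro n
    have h := (stronglyMeasurable_condExp :
      StronglyMeasurable[F n] (condExp (F n) θ g)).measurable measurableSet_Iio (t := Set.Iio t)
    exact h
  set E : ℕ → Set X := disjointed s with hEdef
  have hpartial : ∀ n, MeasurableSet[F n] (partialSups s n) := by
    intro n
    induction n with
    | zero => rw [partialSups_zero]; exact hs_meas 0
    | succ n ih =>
      rw [partialSups_add_one]
      exact MeasurableSet.union (hFmono (Nat.le_succ n) _ ih) (hs_meas (n+1))
  have hE_measF : ∀ n, MeasurableSet[F n] (E n) := by
    intro n
    cases n with
    | zero => rw [hEdef, disjointed_zero]; exact hs_meas 0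
    | succ n =>
      rw [hEdef, disjointed_add_one]
      exact MeasurableSet.diff (hs_meas (n+1)) (hFmono (Nat.le_succ n) _ (hpartial n))
  have hE_meas : ∀ n, MeasurableSet (E n) := fun n => hFle n _ (hE_measF n)
  have hE_disj : Pairwise (Function.onFun Disjoint E) := disjoint_disjointed s
  have key : ∀ n, θ (A ∩ E n) ≤ ENNReal.ofReal t * θ (E n) := by
    intro n
    have h1 : ∫ x in E n, g x ∂θ = (θ (A ∩ E n)).toReal := by
      rw [hgdef, setIntegral_indicator hA, setIntegral_const, Set.inter_comm]
      simp [Measure.real]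
    have h2 : ∫ x in E n, g x ∂θ = ∫ x in E n, f n x ∂θ :=
      (setIntegral_condExp (hFle n) hg (hE_measF n)).symm
    have h3 : ∫ x in E n, f n x ∂θ ≤ t * (θ (E n)).toReal := by
      calc ∫ x in E n, f n x ∂θ ≤ ∫ _x in E n, t ∂θ := by
            refine setIntegral_mono_on integrable_condExp.integrableOn
              (integrable_const t).integrableOn (hE_meas n) ?_
            intro x hx
            exact (disjointed_subset s n hx).le
        _ = t * (θ (E n)).toReal := by rw [setIntegral_const, smul_eq_mul, mul_comm]; rfl
    have h4 : (θ (A ∩ E n)).toReal ≤ t * (θ (E n)).toReal := by rw [← h1, h2]; exact h3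
    calc θ (A ∩ E n) = ENNReal.ofReal ((θ (A ∩ E n)).toReal) := by
          rw [ENNReal.ofReal_toReal (measure_ne_top _ _)]
      _ ≤ ENNReal.ofReal (t * (θ (E n)).toReal) := ENNReal.ofReal_le_ofReal h4
      _ = ENNReal.ofReal t * ENNReal.ofReal ((θ (E n)).toReal) := ENNReal.ofReal_mul ht.le
      _ = ENNReal.ofReal t * θ (E n) := by rw [ENNReal.ofReal_toReal (measure_ne_top _ _)]
  have hset : {x | ∃ n, condExp (F n) θ (A.indicator fun _ => (1:ℝ)) x < t} = ⋃ n, E n := by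
    rw [hEdef, iUnion_disjointed]
    ext x; simp [hsdef, hfdef, hgdef]
  rw [hset, Set.inter_iUnion]
  calc θ (⋃ n, A ∩ E n) ≤ ∑' n, θ (A ∩ E n) := measure_iUnion_le _
    _ ≤ ∑' n, ENNReal.ofReal t * θ (E n) := ENNReal.tsum_le_tsum key
    _ = ENNReal.ofReal t * ∑' n, θ (E n) := ENNReal.tsum_mul_left
    _ = ENNReal.ofReal t * θ (⋃ n, E n) := by rw [measure_iUnion hE_disj hE_meas]
    _ ≤ ENNReal.ofReal t * 1 := mul_le_mul_right (prob_le_one) _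
    _ = ENNReal.ofReal t := mul_one _


/-- Increasing martingale theorem for conditional information: if `F_n ↑ F`, then
`sup_n I(θ, ξ | F_n) ∈ L¹`, `I(θ, ξ | F_n) → I(θ, ξ | F)` a.e. and in `L¹`, and
`H(θ, ξ | F_n) → H(θ, ξ | F)`. -/
theorem infoCond_martingale_convergence
    {X : Type*} [m0 : MeasurableSpace X] (θ : Measure X)
    [MeasureTheory.IsProbabilityMeasure θ]
    {ι : Type*} [Countable ι] (ξ : ι → Set X)
    (hξmeas : ∀ i, MeasurableSet (ξ i))
    (hξdisj : Pairwise (Function.onFun Disjoint ξ))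
    (hξcover : (⋃ i, ξ i) = Set.univ)
    (hHξ : Summable fun i => Real.negMulLog ((θ (ξ i)).toReal))
    (F : ℕ → MeasurableSpace X) (hFmono : Monotone F) (hFle : ∀ n, F n ≤ m0) :
    (∀ᵐ x ∂θ, BddAbove (Set.range fun n => infoCond m0 θ ξ (F n) x)) ∧
      Integrable (fun x => ⨆ n, infoCond m0 θ ξ (F n) x) θ ∧
      (∀ᵐ x ∂θ, Tendsto (fun n => infoCond m0 θ ξ (F n) x) atTop
        (𝓝 (infoCond m0 θ ξ (⨆ n, F n) x))) ∧
      Tendsto (fun n => ∫ x, |infoCond m0 θ ξ (F n) x -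
          infoCond m0 θ ξ (⨆ n, F n) x| ∂θ) atTop (𝓝 0) ∧
      Tendsto (fun n => ∫ x, infoCond m0 θ ξ (F n) x ∂θ) atTop
        (𝓝 (∫ x, infoCond m0 θ ξ (⨆ n, F n) x ∂θ)) := by
  classical
  have hGle : (⨆ n, F n) ≤ m0 := iSup_le hFle
  set g : ι → X → ℝ := fun i => (ξ i).indicator (fun _ => (1:ℝ)) with hgdef
  have hgint : ∀ i, Integrable (g i) θ := fun i => (integrable_const 1).indicator (hξmeas i)
  have hidx : ∀ x : X, ∃ i, x ∈ ξ i := by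
    intro x
    have : x ∈ ⋃ i, ξ i := hξcover ▸ Set.mem_univ x
    exact Set.mem_iUnion.mp this
  have heval : ∀ (F' : MeasurableSpace X) (x : X) (i : ι), x ∈ ξ i →
      infoCond m0 θ ξ F' x = -Real.log (condExp F' θ (g i) x) := by
    intro F' x i hx
    have h0 : ∀ j, j ≠ i → (ξ j).indicator (fun _ => (1:ℝ)) x *
        (-Real.log (condExp F' θ ((ξ j).indicator fun _ => (1:ℝ)) x)) = 0 := by
      intro j hj
      have hxj : x ∉ ξ j := fun hxj => Set.disjoint_left.mp (hξdisj hj) hxj hx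
      rw [Set.indicator_of_notMem hxj, zero_mul]
    rw [infoCond, tsum_eq_single i h0, Set.indicator_of_mem hx, one_mul]
  have hmeasI : ∀ (F' : MeasurableSpace X), F' ≤ m0 → Measurable[m0] (infoCond m0 θ ξ F') := by
    intro F' hF'
    have hφ : ∀ i, Measurable[m0] fun x => -Real.log (condExp F' θ (g i) x) := fun i =>
      (Real.measurable_log.comp (stronglyMeasurable_condExp.mono hF').measurable).neg
    intro t ht
    have hpre : infoCond m0 θ ξ F' ⁻¹' t
        = ⋃ i, ξ i ∩ (fun x => -Real.log (condExp F' θ (g i) x)) ⁻¹' t := by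
      ext x
      simp only [Set.mem_preimage, Set.mem_iUnion, Set.mem_inter_iff]
      constructor
      · intro hxt
        obtain ⟨i, hxi⟩ := hidx x
        exact ⟨i, hxi, by rwa [← heval F' x i hxi]⟩
      · rintro ⟨i, hxi, hxt⟩
        rwa [heval F' x i hxi]
    rw [hpre]
    exact MeasurableSet.iUnion fun i => (hξmeas i).inter (hφ i ht)
  have hbnd : ∀ (F' : MeasurableSpace X), F' ≤ m0 → ∀ i : ι,
      ∀ᵐ x ∂θ, 0 ≤ condExp F' θ (g i) x ∧ condExp F' θ (g i) x ≤ 1 := by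
    intro F' hF' i
    have h0 : 0 ≤ᵐ[θ] condExp F' θ (g i) :=
      condExp_nonneg (ae_of_all _ fun x => Set.indicator_nonneg (fun _ _ => zero_le_one) x)
    have h1 : condExp F' θ (g i) ≤ᵐ[θ] condExp F' θ (fun _ => (1:ℝ)) :=
      condExp_mono (hgint i) (integrable_const 1)
        (ae_of_all _ fun x => Set.indicator_le_self' (fun _ _ => zero_le_one) x)
    rw [condExp_const hF'] at h1
    filter_upwards [h0, h1] with x hx0 hx1
    exact ⟨hx0, hx1⟩
  -- the maximal function
  set J : X → ℝ≥0∞ := fun x => ⨆ n, ENNReal.ofReal (infoCond m0 θ ξ (F n) x) with hJdef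
  have hJmeas : Measurable[m0] J :=
    Measurable.iSup (fun n => (hmeasI (F n) (hFle n)).ennreal_ofReal)
  have hmaximal : ∀ (i : ι) (t : ℝ), 0 < t →
      θ (ξ i ∩ {x | ∃ n, condExp (F n) θ (g i) x < t}) ≤ ENNReal.ofReal t := by
    intro i t ht
    exact maximal_ineq θ (ξ i) (hξmeas i) F hFmono hFle t ht
  have hlevel : ∀ (i : ι) (k : ℕ),
      θ ({x | (k : ℝ≥0∞) < J x} ∩ ξ i)
        ≤ min (θ (ξ i)) (ENNReal.ofReal (Real.exp (-(k:ℝ)))) := by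
    intro i k
    refine le_min (measure_mono Set.inter_subset_right) ?_
    have hsub : {x | (k : ℝ≥0∞) < J x} ∩ ξ i
        ⊆ ξ i ∩ {x | ∃ n, condExp (F n) θ (g i) x < Real.exp (-(k:ℝ))} := by
      rintro x ⟨hJx, hxi⟩
      refine ⟨hxi, ?_⟩
      have hJx' : (k:ℝ≥0∞) < ⨆ n, ENNReal.ofReal (infoCond m0 θ ξ (F n) x) := hJx
      obtain ⟨n, hn⟩ := lt_iSup_iff.mp hJx'
      have hk : (k:ℝ) < infoCond m0 θ ξ (F n) x := by
        rw [← ENNReal.ofReal_natCast k] at hn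
        exact (ENNReal.ofReal_lt_ofReal_iff_of_nonneg (Nat.cast_nonneg k)).mp hn
      rw [heval (F n) x i hxi] at hk
      by_cases hpos : 0 < condExp (F n) θ (g i) x
      · have hlog : Real.log (condExp (F n) θ (g i) x) < -(k:ℝ) := by linarith
        have h2 := Real.exp_lt_exp.2 hlog
        rw [Real.exp_log hpos] at h2
        exact ⟨n, h2⟩
      · exact ⟨n, lt_of_le_of_lt (not_lt.mp hpos) (Real.exp_pos _)⟩
    exact le_trans (measure_mono hsub) (hmaximal i _ (Real.exp_pos _))
  have hple1 : ∀ i, (θ (ξ i)).toReal ≤ 1 := by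
    intro i
    have h := ENNReal.toReal_mono ENNReal.one_ne_top (prob_le_one (μ := θ) (s := ξ i))
    simpa using h
  have hsum_exp : Summable (fun k : ℕ => Real.exp (-(k : ℝ))) := by
    have hgeom : ∀ k : ℕ, Real.exp (-(k : ℝ)) = (Real.exp (-1)) ^ k := by
      intro k; rw [← Real.exp_nat_mul]; ring_nf
    simp_rw [hgeom]
    exact summable_geometric_of_lt_one (Real.exp_pos _).le
      (Real.exp_lt_one_iff.mpr (by norm_num))
  have hIi : ∀ i : ι, ∫⁻ x in ξ i, J x ∂θ
      ≤ ENNReal.ofReal (Real.negMulLog (θ (ξ i)).toReal + 3 * (θ (ξ i)).toReal) := by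
    intro i
    by_cases hpi : θ (ξ i) = 0
    · rw [Measure.restrict_eq_zero.mpr hpi, lintegral_zero_measure]
      exact zero_le
    · have hptop : θ (ξ i) ≠ ⊤ := measure_ne_top θ _
      have hp0 : 0 < (θ (ξ i)).toReal := ENNReal.toReal_pos hpi hptop
      have hminsum : Summable (fun k : ℕ => min (θ (ξ i)).toReal (Real.exp (-(k:ℝ)))) :=
        Summable.of_nonneg_of_le (fun k => le_min hp0.le (Real.exp_pos _).le)
          (fun k => min_le_right _ _) hsum_exp
      have hofmin : ∀ a b : ℝ, ENNReal.ofReal (min a b)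
          = min (ENNReal.ofReal a) (ENNReal.ofReal b) :=
        fun a b => Monotone.map_min (fun _ _ h => ENNReal.ofReal_le_ofReal h)
      calc ∫⁻ x in ξ i, J x ∂θ
          ≤ ∫⁻ x in ξ i, ∑' k : ℕ, {y | (k:ℝ≥0∞) < J y}.indicator (1 : X → ℝ≥0∞) x ∂θ := by
            refine lintegral_mono fun x => ?_
            refine le_trans (le_tsum_levels (J x)) (le_of_eq (tsum_congr fun k => ?_))
            simp [Set.indicator_apply, Set.mem_setOf_eq]
        _ = ∑' k : ℕ, ∫⁻ x in ξ i, {y | (k:ℝ≥0∞) < J y}.indicator (1 : X → ℝ≥0∞) x ∂θ :=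
            lintegral_tsum fun k =>
              (measurable_const.indicator (hJmeas measurableSet_Ioi)).aemeasurable
        _ = ∑' k : ℕ, θ ({y | (k:ℝ≥0∞) < J y} ∩ ξ i) := by
            refine tsum_congr fun k => ?_
            have hS : MeasurableSet {y | (k:ℝ≥0∞) < J y} := hJmeas measurableSet_Ioi
            rw [lintegral_indicator_one (s := {y | (k:ℝ≥0∞) < J y}) hS,
              Measure.restrict_apply hS]
        _ ≤ ∑' k : ℕ, min (θ (ξ i)) (ENNReal.ofReal (Real.exp (-(k:ℝ)))) :=
            ENNReal.tsum_le_tsum fun k => hlevel i k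
        _ = ∑' k : ℕ, ENNReal.ofReal (min (θ (ξ i)).toReal (Real.exp (-(k:ℝ)))) := by
            refine tsum_congr fun k => ?_
            rw [hofmin, ENNReal.ofReal_toReal hptop]
        _ = ENNReal.ofReal (∑' k : ℕ, min (θ (ξ i)).toReal (Real.exp (-(k:ℝ)))) :=
            (ENNReal.ofReal_tsum_of_nonneg
              (fun k => le_min hp0.le (Real.exp_pos _).le) hminsum).symm
        _ ≤ ENNReal.ofReal (Real.negMulLog (θ (ξ i)).toReal + 3 * (θ (ξ i)).toReal) :=
            ENNReal.ofReal_le_ofReal (series_bound _ hp0 (hple1 i))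
  have hsum_p : Summable (fun i => (θ (ξ i)).toReal) := by
    apply ENNReal.summable_toReal
    rw [← measure_iUnion hξdisj hξmeas]
    exact measure_ne_top θ _
  have hnn : ∀ i, 0 ≤ Real.negMulLog (θ (ξ i)).toReal + 3 * (θ (ξ i)).toReal := fun i =>
    add_nonneg (Real.negMulLog_nonneg ENNReal.toReal_nonneg (hple1 i))
      (by positivity)
  have hHsum : Summable (fun i => Real.negMulLog (θ (ξ i)).toReal + 3 * (θ (ξ i)).toReal) :=
    hHξ.add (hsum_p.mul_left 3)
  have hJfin : ∫⁻ x, J x ∂θ ≠ ⊤ := by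
    have hJsplit : ∫⁻ x, J x ∂θ = ∑' i, ∫⁻ x in ξ i, J x ∂θ := by
      rw [← setLIntegral_univ, ← hξcover, lintegral_iUnion hξmeas hξdisj]
    rw [hJsplit]
    refine ne_top_of_le_ne_top ?_ (ENNReal.tsum_le_tsum hIi)
    rw [← ENNReal.ofReal_tsum_of_nonneg hnn hHsum]
    exact ENNReal.ofReal_ne_top
  have hJae : ∀ᵐ x ∂θ, J x < ⊤ := ae_lt_top hJmeas hJfin
  -- Lévy upward convergence
  have hT : ∀ i : ι, ∀ᵐ x ∂θ, Tendsto (fun n => condExp (F n) θ (g i) x) atTop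
      (𝓝 (condExp (⨆ n, F n) θ (g i) x)) := by
    intro i
    have h := tendsto_ae_condExp (μ := θ) (ℱ := ⟨F, hFmono, hFle⟩) (g i)
    exact h
  -- positivity of the limit conditional expectation on ξ i
  have hposG : ∀ i : ι, ∀ᵐ x ∂θ, x ∈ ξ i → 0 < condExp (⨆ n, F n) θ (g i) x := by
    intro i
    have hsG : MeasurableSet[⨆ n, F n] {x | condExp (⨆ n, F n) θ (g i) x ≤ 0} := by
      have h := (stronglyMeasurable_condExp :
        StronglyMeasurable[⨆ n, F n] (condExp (⨆ n, F n) θ (g i))).measurable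
        (measurableSet_Iic (a := (0:ℝ)))
      exact h
    set s : Set X := {x | condExp (⨆ n, F n) θ (g i) x ≤ 0} with hsdef
    have hsm : MeasurableSet[m0] s := hGle _ hsG
    have h1 : ∫ x in s, g i x ∂θ = (θ (s ∩ ξ i)).toReal := by
      simp only [hgdef]
      rw [setIntegral_indicator (hξmeas i), setIntegral_const]
      simp [Measure.real]
    have h2 : ∫ x in s, condExp (⨆ n, F n) θ (g i) x ∂θ = ∫ x in s, g i x ∂θ :=
      setIntegral_condExp hGle (hgint i) hsG
    have h3 : ∫ x in s, condExp (⨆ n, F n) θ (g i) x ∂θ ≤ 0 :=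
      setIntegral_nonpos (μ := θ) hsm (fun x hx => hx)
    have h4 : θ (s ∩ ξ i) = 0 := by
      have hle0 : (θ (s ∩ ξ i)).toReal ≤ 0 := by rw [← h1, ← h2]; exact h3
      have h6 : (θ (s ∩ ξ i)).toReal = 0 := le_antisymm hle0 ENNReal.toReal_nonneg
      exact ((ENNReal.toReal_eq_zero_iff _).mp h6).resolve_right (measure_ne_top θ _)
    have h7 : ∀ᵐ x ∂θ, x ∉ s ∩ ξ i := measure_eq_zero_iff_ae_notMem.mp h4
    filter_upwards [h7] with x hx hxi
    by_contra hc
    exact hx ⟨not_lt.mp hc, hxi⟩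
  have hballn : ∀ᵐ x ∂θ, ∀ i : ι, ∀ n : ℕ,
      0 ≤ condExp (F n) θ (g i) x ∧ condExp (F n) θ (g i) x ≤ 1 :=
    ae_all_iff.mpr fun i => ae_all_iff.mpr fun n => hbnd (F n) (hFle n) i
  have hballG : ∀ᵐ x ∂θ, ∀ i : ι,
      0 ≤ condExp (⨆ n, F n) θ (g i) x ∧ condExp (⨆ n, F n) θ (g i) x ≤ 1 :=
    ae_all_iff.mpr fun i => hbnd _ hGle i
  have hTall : ∀ᵐ x ∂θ, ∀ i : ι, Tendsto (fun n => condExp (F n) θ (g i) x) atTop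
      (𝓝 (condExp (⨆ n, F n) θ (g i) x)) := ae_all_iff.mpr hT
  have hposall : ∀ᵐ x ∂θ, ∀ i : ι, x ∈ ξ i → 0 < condExp (⨆ n, F n) θ (g i) x :=
    ae_all_iff.mpr hposG
  have hmain : ∀ᵐ x ∂θ,
      (∀ n, 0 ≤ infoCond m0 θ ξ (F n) x) ∧
      0 ≤ infoCond m0 θ ξ (⨆ n, F n) x ∧
      (∀ n, infoCond m0 θ ξ (F n) x ≤ (J x).toReal) ∧
      Tendsto (fun n => infoCond m0 θ ξ (F n) x) atTop
        (𝓝 (infoCond m0 θ ξ (⨆ n, F n) x)) := by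
    filter_upwards [hJae, hballn, hballG, hTall, hposall] with x hJx hbn hbG hTx hpx
    obtain ⟨i, hxi⟩ := hidx x
    have hIn : ∀ n, infoCond m0 θ ξ (F n) x = -Real.log (condExp (F n) θ (g i) x) :=
      fun n => heval (F n) x i hxi
    have hIG : infoCond m0 θ ξ (⨆ n, F n) x
        = -Real.log (condExp (⨆ n, F n) θ (g i) x) := heval _ x i hxi
    have hnn : ∀ n, 0 ≤ infoCond m0 θ ξ (F n) x := by
      intro n; rw [hIn n]
      have := Real.log_nonpos (hbn i n).1 (hbn i n).2; linarith
    have hnnG : 0 ≤ infoCond m0 θ ξ (⨆ n, F n) x := by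
      rw [hIG]; have := Real.log_nonpos (hbG i).1 (hbG i).2; linarith
    have hle : ∀ n, infoCond m0 θ ξ (F n) x ≤ (J x).toReal := by
      intro n
      have h1 : ENNReal.ofReal (infoCond m0 θ ξ (F n) x) ≤ J x :=
        le_iSup (fun n => ENNReal.ofReal (infoCond m0 θ ξ (F n) x)) n
      have h2 := ENNReal.toReal_mono hJx.ne h1
      rwa [ENNReal.toReal_ofReal (hnn n)] at h2
    refine ⟨hnn, hnnG, hle, ?_⟩
    rw [hIG]
    have hcont : ContinuousAt Real.log (condExp (⨆ n, F n) θ (g i) x) :=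
      Real.continuousAt_log (ne_of_gt (hpx i hxi))
    have h := (hcont.tendsto.comp (hTx i)).neg
    exact Tendsto.congr (fun n => (hIn n).symm) h
  have hJtoReal_int : Integrable (fun x => (J x).toReal) θ :=
    integrable_toReal_of_lintegral_ne_top hJmeas.aemeasurable hJfin
  have hSmeas : Measurable[m0] (fun x => ⨆ n, infoCond m0 θ ξ (F n) x) :=
    Measurable.iSup fun n => hmeasI (F n) (hFle n)
  have hGmeasI : Measurable[m0] (infoCond m0 θ ξ (⨆ n, F n)) := hmeasI _ hGle
  refine ⟨?_, ?_, ?_, ?_, ?_⟩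
  · filter_upwards [hmain] with x hx
    exact ⟨(J x).toReal, by rintro y ⟨n, rfl⟩; exact hx.2.2.1 n⟩
  · refine hJtoReal_int.mono' hSmeas.aestronglyMeasurable ?_
    filter_upwards [hmain] with x hx
    have hbdd : BddAbove (Set.range fun n => infoCond m0 θ ξ (F n) x) :=
      ⟨(J x).toReal, by rintro y ⟨n, rfl⟩; exact hx.2.2.1 n⟩
    have h1 : (⨆ n, infoCond m0 θ ξ (F n) x) ≤ (J x).toReal := ciSup_le fun n => hx.2.2.1 n
    have h0 : 0 ≤ ⨆ n, infoCond m0 θ ξ (F n) x := le_trans (hx.1 0) (le_ciSup hbdd 0)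
    rw [Real.norm_eq_abs, abs_of_nonneg h0]
    exact h1
  · filter_upwards [hmain] with x hx
    exact hx.2.2.2
  · have h := tendsto_integral_of_dominated_convergence (μ := θ)
      (F := fun n x => |infoCond m0 θ ξ (F n) x - infoCond m0 θ ξ (⨆ n, F n) x|)
      (f := fun _ => (0:ℝ)) (fun x => 2 * (J x).toReal)
      (fun n => (((hmeasI (F n) (hFle n)).sub hGmeasI).abs).aestronglyMeasurable)
      (hJtoReal_int.const_mul 2) ?_ ?_
    · rw [integral_zero] at h; exact h
    · intro n
      filter_upwards [hmain] with x hx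
      have hIG_le : infoCond m0 θ ξ (⨆ n, F n) x ≤ (J x).toReal :=
        le_of_tendsto hx.2.2.2 (Eventually.of_forall fun n => hx.2.2.1 n)
      have h1 := hx.1 n
      have h2 := hx.2.1
      have h3 := hx.2.2.1 n
      rw [Real.norm_eq_abs, abs_abs]
      refine abs_le.mpr ⟨by linarith, by linarith⟩
    · filter_upwards [hmain] with x hx
      have h0 := hx.2.2.2.sub (tendsto_const_nhds
        (x := infoCond m0 θ ξ (⨆ n, F n) x) (f := atTop))
      rw [sub_self] at h0
      have := h0.abs
      rwa [abs_zero] at this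
  · exact tendsto_integral_of_dominated_convergence (μ := θ)
      (F := fun n x => infoCond m0 θ ξ (F n) x)
      (f := infoCond m0 θ ξ (⨆ n, F n)) (fun x => (J x).toReal)
      (fun n => (hmeasI (F n) (hFle n)).aestronglyMeasurable)
      hJtoReal_int
      (fun n => by
        filter_upwards [hmain] with x hx
        rw [Real.norm_eq_abs, abs_of_nonneg (hx.1 n)]
        exact hx.2.2.1 n)
      (by filter_upwards [hmain] with x hx; exact hx.2.2.2)
end

section
/- With notation as in the disintegration framework (β Bernoulli on Λ^ℕ, T = σ^N, Ω = Γ^ℕ, P Bernoulli with marginal (β(ω₁)), β^ω the product conditional measures), define the measure Q on Ω × Λ^ℕ by ∫ f dQ = ∫_Ω ∫_{Λ^ℕ} f(ω,x) dβ^ω(x) dP(ω), and the map T(ω,x) = (Tω, Tx). Then Q is T-invariant and T is mixing with respect to Q. -/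
open MeasureTheory Filter Topology
set_option linter.unusedSectionVars false

namespace PeyriereAux
open scoped symmDiff

variable {α : Type*} [Fintype α] [MeasurableSpace α] [MeasurableSingletonClass α]

def res (M : ℕ) (x : ℕ → α) : Fin M → α := fun k => x k
def shf (x : ℕ → α) : ℕ → α := fun i => x (i + 1)
def cyl {n : ℕ} (I : Fin n → α) : Set (ℕ → α) := {x | ∀ k : Fin n, x (k : ℕ) = I k}

lemma measurable_shf : Measurable (shf (α := α)) :=
  measurable_pi_lambda _ fun _ => measurable_pi_apply _
lemma measurable_res (M : ℕ) : Measurable (res (α := α) M) :=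
  measurable_pi_lambda _ fun _ => measurable_pi_apply _
lemma shf_iterate (n : ℕ) (x : ℕ → α) (i : ℕ) : (shf)^[n] x i = x (i + n) := by
  induction n generalizing x with
  | zero => simp
  | succ n ih =>
    rw [Function.iterate_succ_apply, ih]
    show x (i + n + 1) = x (i + (n + 1))
    rw [Nat.add_assoc]
lemma measurableSet_cyl {n : ℕ} (I : Fin n → α) : MeasurableSet (cyl I) := by
  have : cyl I = ⋂ k : Fin n, (fun x : ℕ → α => x (k : ℕ)) ⁻¹' {I k} := by
    ext x; simp [cyl]
  rw [this]
  exact MeasurableSet.iInter fun k => (measurable_pi_apply _) (measurableSet_singleton _)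
lemma res_preimage_singleton (M : ℕ) (J : Fin M → α) :
    res (α := α) M ⁻¹' {J} = cyl J := by
  ext x
  simp [res, cyl, funext_iff]

variable (w : α → ENNReal) (μ : Measure (ℕ → α))

/-- measure of a finite union of cylinders -/
lemma meas_res (hμ : ∀ (n : ℕ) (I : Fin n → α), μ (cyl I) = ∏ k, w (I k))
    (M : ℕ) (F : Finset (Fin M → α)) :
    μ (res M ⁻¹' ↑F) = ∑ J ∈ F, ∏ k, w (J k) := by
  have hU : (res M ⁻¹' ↑F : Set (ℕ → α)) = ⋃ J ∈ F, res M ⁻¹' {J} := by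
    ext x; simp
  rw [hU, measure_biUnion_finset ?_ ?_]
  · exact Finset.sum_congr rfl fun J _ => by
      rw [res_preimage_singleton]; exact hμ M J
  · intro a _ b _ hab
    refine Set.disjoint_left.mpr fun x hx hx' => hab ?_
    simp only [Set.mem_preimage, Set.mem_singleton_iff] at hx hx'
    rw [← hx, ← hx']
  · intro J _
    rw [res_preimage_singleton]; exact measurableSet_cyl J

/-- key computation: measure of (first-M-coords constraint) ∩ (next-L-coords cylinder) -/
lemma meas_block (hμ : ∀ (n : ℕ) (I : Fin n → α), μ (cyl I) = ∏ k, w (I k))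
    (M L : ℕ) (F : Finset (Fin M → α)) (J : Fin L → α) :
    μ {x | res M x ∈ F ∧ ∀ k : Fin L, x (M + (k : ℕ)) = J k}
      = (∑ K ∈ F, ∏ k, w (K k)) * ∏ k, w (J k) := by
  classical
  have hset : {x | res M x ∈ F ∧ ∀ k : Fin L, x (M + (k : ℕ)) = J k}
      = res (M + L) ⁻¹' ↑(F.image fun K => Fin.append K J) := by
    ext x
    simp only [Set.mem_setOf_eq, Set.mem_preimage, Finset.coe_image, Set.mem_image,
      Finset.mem_coe]
    constructor
    · rintro ⟨hF, hJ⟩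
      refine ⟨res M x, hF, funext fun j => ?_⟩
      refine Fin.addCases (fun i => ?_) (fun i => ?_) j
      · rw [Fin.append_left]
        simp [res]
      · rw [Fin.append_right]
        simpa [res] using (hJ i).symm
    · rintro ⟨K, hK, heq⟩
      constructor
      · have hK' : res M x = K := funext fun i => by
          have h := congrFun heq (Fin.castAdd L i)
          rw [Fin.append_left] at h
          simpa [res] using h.symm
        rw [hK']; exact hK
      · intro k
        have h := congrFun heq (Fin.natAdd M k)
        rw [Fin.append_right] at h
        simpa [res] using h.symm
  rw [hset, meas_res w μ hμ]
  rw [Finset.sum_image (fun a _ b _ h => funext fun i => by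
    have := congrFun h (Fin.castAdd L i)
    rwa [Fin.append_left, Fin.append_left] at this)]
  calc (∑ K ∈ F, ∏ k : Fin (M + L), w (Fin.append K J k))
      = ∑ K ∈ F, (∏ k, w (K k)) * ∏ k, w (J k) := by
        refine Finset.sum_congr rfl fun K _ => ?_
        rw [Fin.prod_univ_add]
        simp [Fin.append_left, Fin.append_right]
    _ = (∑ K ∈ F, ∏ k, w (K k)) * ∏ k, w (J k) := by rw [Finset.sum_mul]

lemma sum_one (hμ : ∀ (n : ℕ) (I : Fin n → α), μ (cyl I) = ∏ k, w (I k))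
    [IsProbabilityMeasure μ] :
    ∑ K ∈ (Finset.univ : Finset (Fin 1 → α)), ∏ k, w (K k) = 1 := by
  have h := meas_res w μ hμ 1 Finset.univ
  rw [Finset.coe_univ, Set.preimage_univ, measure_univ] at h
  exact h.symm

/-- the collection of cylinder sets -/
def cylSets (α : Type*) : Set (Set (ℕ → α)) := {s | ∃ (n : ℕ) (I : Fin n → α), s = cyl I}

/-- the algebra of sets depending on finitely many coordinates -/
def algSets (α : Type*) : Set (Set (ℕ → α)) :=
  {s | ∃ (M : ℕ) (F : Finset (Fin M → α)), s = res M ⁻¹' ↑F}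

lemma cyl_subset_cyl {n n' : ℕ} {I : Fin n → α} {I' : Fin n' → α} (h : n ≤ n')
    (hne : (cyl I ∩ cyl I').Nonempty) : cyl I' ⊆ cyl I := by
  obtain ⟨x, hx1, hx2⟩ := hne
  intro y hy k
  have hk : (k : ℕ) < n' := lt_of_lt_of_le k.2 h
  calc y (k : ℕ) = I' ⟨k, hk⟩ := hy ⟨k, hk⟩
    _ = x (k : ℕ) := (hx2 ⟨k, hk⟩).symm
    _ = I k := hx1 k

lemma isPiSystem_cylSets : IsPiSystem (cylSets α) := by
  rintro _ ⟨n, I, rfl⟩ _ ⟨n', I', rfl⟩ hne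
  rcases le_total n n' with h | h
  · rw [Set.inter_eq_right.mpr (cyl_subset_cyl h hne)]
    exact ⟨n', I', rfl⟩
  · rw [Set.inter_comm] at hne
    rw [Set.inter_eq_left.mpr (cyl_subset_cyl h hne)]
    exact ⟨n, I, rfl⟩

lemma generateFrom_cylSets :
    MeasurableSpace.generateFrom (cylSets α) = MeasurableSpace.pi := by
  apply le_antisymm
  · exact MeasurableSpace.generateFrom_le (by rintro _ ⟨n, I, rfl⟩; exact measurableSet_cyl I)
  · have hm : ∀ k : ℕ,
        Measurable[MeasurableSpace.generateFrom (cylSets α)] (fun x : ℕ → α => x k) := by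
      intro k
      refine @measurable_to_countable' α (ℕ → α) _ _
        (MeasurableSpace.generateFrom (cylSets α)) _ fun a => ?_
      have hset : (fun x : ℕ → α => x k) ⁻¹' {a} =
          ⋃ (I : Fin (k + 1) → α) (_ : I ⟨k, Nat.lt_succ_self k⟩ = a), cyl I := by
        ext x
        simp only [Set.mem_preimage, Set.mem_singleton_iff, Set.mem_iUnion]
        constructor
        · intro h
          exact ⟨res (k + 1) x, by simpa [res] using h, fun j => rfl⟩
        · rintro ⟨I, hIa, hx⟩
          rw [← hIa]
          exact hx ⟨k, Nat.lt_succ_self k⟩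
      rw [hset]
      exact MeasurableSet.iUnion fun I => MeasurableSet.iUnion fun _ =>
        MeasurableSpace.measurableSet_generateFrom ⟨_, _, rfl⟩
    show MeasurableSpace.pi ≤ _
    rw [show (MeasurableSpace.pi : MeasurableSpace (ℕ → α)) =
      ⨆ k : ℕ, MeasurableSpace.comap (fun x : ℕ → α => x k)
        (inferInstance : MeasurableSpace α) from rfl]
    exact iSup_le fun k => (hm k).comap_le

lemma algSets_pad {M M' : ℕ} (h : M ≤ M') (F : Finset (Fin M → α)) :
    ∃ F' : Finset (Fin M' → α), res M ⁻¹' (↑F : Set (Fin M → α)) = res M' ⁻¹' ↑F' := by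
  classical
  refine ⟨Finset.univ.filter (fun K => (fun i : Fin M => K (Fin.castLE h i)) ∈ F), ?_⟩
  ext x
  simp only [Set.mem_preimage, Finset.coe_filter, Finset.mem_univ, true_and,
    Set.mem_setOf_eq, Finset.mem_coe]
  have : (fun i : Fin M => res M' x (Fin.castLE h i)) = res M x := by
    funext i
    simp [res]
  rw [this]

lemma isSetAlgebra_algSets : IsSetAlgebra (algSets α) where
  empty_mem := ⟨0, ∅, by simp⟩
  compl_mem := by
    classical
    rintro _ ⟨M, F, rfl⟩
    exact ⟨M, Fᶜ, by simp [Set.preimage_compl]⟩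
  union_mem := by
    classical
    rintro _ _ ⟨M₁, F₁, rfl⟩ ⟨M₂, F₂, rfl⟩
    obtain ⟨G₁, h₁⟩ := algSets_pad (le_max_left M₁ M₂) F₁
    obtain ⟨G₂, h₂⟩ := algSets_pad (le_max_right M₁ M₂) F₂
    exact ⟨max M₁ M₂, G₁ ∪ G₂, by rw [h₁, h₂]; simp [Set.preimage_union]⟩

lemma generateFrom_algSets :
    MeasurableSpace.generateFrom (algSets α) = MeasurableSpace.pi := by
  apply le_antisymm
  · apply MeasurableSpace.generateFrom_le
    rintro _ ⟨M, F, rfl⟩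
    exact measurable_res M MeasurableSet.of_discrete
  · rw [← generateFrom_cylSets]
    apply MeasurableSpace.generateFrom_mono
    rintro _ ⟨n, I, rfl⟩
    exact ⟨n, {I}, by simp [res_preimage_singleton]⟩

variable (w : α → ENNReal) (μ : Measure (ℕ → α))

lemma shf_measurePreserving (hμ : ∀ (n : ℕ) (I : Fin n → α), μ (cyl I) = ∏ k, w (I k))
    [IsProbabilityMeasure μ] : MeasurePreserving (shf) μ μ := by
  refine ⟨measurable_shf, ?_⟩
  have : IsProbabilityMeasure (μ.map shf) :=
    Measure.isProbabilityMeasure_map measurable_shf.aemeasurable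
  refine ext_of_generate_finite (cylSets α) generateFrom_cylSets.symm isPiSystem_cylSets ?_ ?_
  · rintro _ ⟨n, I, rfl⟩
    rw [Measure.map_apply measurable_shf (measurableSet_cyl I)]
    have hset : shf ⁻¹' cyl I =
        {x | res 1 x ∈ (Finset.univ : Finset (Fin 1 → α)) ∧
          ∀ k : Fin n, x (1 + (k : ℕ)) = I k} := by
      ext x
      simp only [Set.mem_preimage, cyl, Set.mem_setOf_eq, shf, Finset.mem_univ, true_and]
      exact forall_congr' fun k => by rw [Nat.add_comm]
    rw [hset, meas_block w μ hμ 1 n Finset.univ I, sum_one w μ hμ, one_mul, hμ n I]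
  · rw [Measure.map_apply measurable_shf MeasurableSet.univ, Set.preimage_univ]

lemma indep_block (hμ : ∀ (n : ℕ) (I : Fin n → α), μ (cyl I) = ∏ k, w (I k))
    [IsProbabilityMeasure μ] (M : ℕ) (F : Finset (Fin M → α))
    {B : Set (ℕ → α)} (hB : MeasurableSet B) :
    μ (res M ⁻¹' ↑F ∩ (shf)^[M] ⁻¹' B) = μ (res M ⁻¹' ↑F) * μ B := by
  have hresF : MeasurableSet (res M ⁻¹' (↑F : Set (Fin M → α))) :=
    measurable_res M MeasurableSet.of_discrete
  have hiter : Measurable ((shf (α := α))^[M]) := measurable_shf.iterate M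
  set ν₁ : Measure (ℕ → α) := (μ.restrict (res M ⁻¹' ↑F)).map (shf)^[M] with hν₁
  set ν₂ : Measure (ℕ → α) := (μ (res M ⁻¹' ↑F)) • μ with hν₂
  have h1 : IsFiniteMeasure ν₁ := by
    constructor
    rw [hν₁, Measure.map_apply hiter MeasurableSet.univ, Set.preimage_univ,
      Measure.restrict_apply MeasurableSet.univ, Set.univ_inter]
    exact measure_lt_top μ _
  have h2 : IsFiniteMeasure ν₂ := by
    constructor
    rw [hν₂, Measure.smul_apply, smul_eq_mul]
    exact ENNReal.mul_lt_top (measure_lt_top μ _) (measure_lt_top μ _)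
  have key : ν₁ = ν₂ := by
    refine ext_of_generate_finite (cylSets α) generateFrom_cylSets.symm isPiSystem_cylSets ?_ ?_
    · rintro _ ⟨L, J, rfl⟩
      rw [hν₁, Measure.map_apply hiter (measurableSet_cyl J),
        Measure.restrict_apply (hiter (measurableSet_cyl J))]
      have hs : (shf)^[M] ⁻¹' cyl J ∩ res M ⁻¹' ↑F
          = {x | res M x ∈ F ∧ ∀ k : Fin L, x (M + (k : ℕ)) = J k} := by
        ext x
        simp only [Set.mem_inter_iff, Set.mem_preimage, cyl, Set.mem_setOf_eq, Finset.mem_coe]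
        rw [and_comm]
        refine and_congr_right fun _ => forall_congr' fun k => ?_
        rw [shf_iterate, Nat.add_comm]
      rw [hs, meas_block w μ hμ M L F J, hν₂, Measure.smul_apply, smul_eq_mul, hμ L J,
        meas_res w μ hμ]
    · rw [hν₁, hν₂, Measure.map_apply hiter MeasurableSet.univ, Set.preimage_univ,
        Measure.restrict_apply MeasurableSet.univ, Set.univ_inter, Measure.smul_apply,
        smul_eq_mul, measure_univ, mul_one]
  calc μ (res M ⁻¹' ↑F ∩ (shf)^[M] ⁻¹' B) = ν₁ B := by
        rw [hν₁, Measure.map_apply hiter hB, Measure.restrict_apply (hiter hB),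
          Set.inter_comm]
    _ = μ (res M ⁻¹' ↑F) * μ B := by rw [key, hν₂, Measure.smul_apply, smul_eq_mul]

lemma measure_le_of_symmDiff {s t : Set (ℕ → α)} :
    μ s ≤ μ t + μ (s ∆ t) := by
  have hsub : s ⊆ t ∪ s ∆ t := by
    intro x hx
    simp only [Set.mem_union, Set.mem_symmDiff]
    tauto
  exact (measure_mono hsub).trans (measure_union_le _ _)

lemma meas_inter_approx (s s₀ t t₀ : Set (ℕ → α)) :
    μ (s ∩ t) ≤ μ (s₀ ∩ t₀) + (μ (s ∆ s₀) + μ (t ∆ t₀)) := by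
  have hsub : s ∩ t ⊆ (s₀ ∩ t₀) ∪ (s ∆ s₀ ∪ t ∆ t₀) := by
    intro x hx
    simp only [Set.mem_union, Set.mem_inter_iff, Set.mem_symmDiff] at *
    tauto
  exact (measure_mono hsub).trans ((measure_union_le _ _).trans
    (add_le_add_right (measure_union_le _ _) _))

theorem shf_mixing (hμ : ∀ (n : ℕ) (I : Fin n → α), μ (cyl I) = ∏ k, w (I k))
    [IsProbabilityMeasure μ] {A B : Set (ℕ → α)}
    (hA : MeasurableSet A) (hB : MeasurableSet B) :
    Tendsto (fun n : ℕ => μ (A ∩ (shf)^[n] ⁻¹' B)) atTop (𝓝 (μ A * μ B)) := by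
  have hfin : μ A * μ B ≠ ⊤ :=
    (ENNReal.mul_lt_top (measure_lt_top μ A) (measure_lt_top μ B)).ne
  rw [ENNReal.tendsto_atTop hfin]
  intro ε hε
  have hMD : μ.MeasureDense (algSets α) :=
    Measure.MeasureDense.of_generateFrom_isSetAlgebra_finite μ isSetAlgebra_algSets
      generateFrom_algSets.symm
  set ε' := min ε 1 with hε'def
  have hε'0 : 0 < ε' := lt_min hε zero_lt_one
  have hε'top : ε' ≠ ⊤ := ne_top_of_le_ne_top ENNReal.one_ne_top (min_le_right _ _)
  set δ : ℝ := ε'.toReal / 5 with hδdef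
  have hδ0 : 0 < δ := by
    have := ENNReal.toReal_pos hε'0.ne' hε'top
    positivity
  obtain ⟨A₀, hA₀mem, hA₀⟩ := hMD.approx A hA (measure_ne_top μ A) δ hδ0
  obtain ⟨B₀, hB₀mem, hB₀⟩ := hMD.approx B hB (measure_ne_top μ B) δ hδ0
  set η := ENNReal.ofReal δ with hηdef
  have hη1 : η ≤ 1 := by
    rw [hηdef]
    refine ENNReal.ofReal_le_one.mpr ?_
    have h1 : ε'.toReal ≤ 1 := by
      have := ENNReal.toReal_mono ENNReal.one_ne_top (min_le_right ε 1)
      simpa using this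
    rw [hδdef]; linarith
  have h5η : η + η + η + η + η ≤ ε := by
    have heq : η + η + η + η + η = ENNReal.ofReal (δ + δ + δ + δ + δ) := by
      rw [ENNReal.ofReal_add, ENNReal.ofReal_add, ENNReal.ofReal_add, ENNReal.ofReal_add]
        <;> positivity
    rw [heq]
    have : δ + δ + δ + δ + δ = ε'.toReal := by rw [hδdef]; ring
    rw [this, ENNReal.ofReal_toReal hε'top]
    exact min_le_left _ _
  have hmA₀ : MeasurableSet A₀ := hMD.measurable A₀ hA₀mem
  have hmB₀ : MeasurableSet B₀ := hMD.measurable B₀ hB₀mem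
  obtain ⟨M₁, F₁, hF₁⟩ := hA₀mem
  obtain ⟨M₂, F₂, hF₂⟩ := hB₀mem
  obtain ⟨M, hM₁, hM₂⟩ : ∃ M, M₁ ≤ M ∧ M₂ ≤ M :=
    ⟨max M₁ M₂, le_max_left _ _, le_max_right _ _⟩
  obtain ⟨FA, hFA⟩ := algSets_pad hM₁ F₁
  obtain ⟨FB, hFB⟩ := algSets_pad hM₂ F₂
  have hA₀' : A₀ = res M ⁻¹' ↑FA := by rw [hF₁, hFA]
  have hB₀' : B₀ = res M ⁻¹' ↑FB := by rw [hF₂, hFB]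
  have hshfMP : MeasurePreserving (shf) μ μ := shf_measurePreserving w μ hμ
  refine ⟨M, fun n hn => ?_⟩
  have hiterMP : MeasurePreserving ((shf (α := α))^[n - M]) μ μ := hshfMP.iterate _
  -- exact independence for the approximants
  have hprod : μ (A₀ ∩ (shf)^[n] ⁻¹' B₀) = μ A₀ * μ B₀ := by
    have hiterate : (shf (α := α))^[n] = (shf)^[n - M] ∘ (shf)^[M] := by
      have h' := Function.iterate_add (shf (α := α)) (n - M) M
      rwa [Nat.sub_add_cancel hn] at h'
    rw [hiterate, Set.preimage_comp, hA₀',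
      indep_block w μ hμ M FA (hiterMP.measurable hmB₀),
      hiterMP.measure_preimage hmB₀.nullMeasurableSet, ← hA₀']
  -- symmetric difference bounds
  have hηA : μ (A ∆ A₀) ≤ η := hA₀.le
  have hηB : μ (B ∆ B₀) ≤ η := hB₀.le
  have hshift : μ (((shf)^[n] ⁻¹' B) ∆ ((shf)^[n] ⁻¹' B₀)) ≤ η := by
    have hpre : ((shf (α := α))^[n] ⁻¹' B) ∆ ((shf)^[n] ⁻¹' B₀)
        = (shf)^[n] ⁻¹' (B ∆ B₀) := by
      ext x
      simp [Set.mem_symmDiff]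
    rw [hpre, (hshfMP.iterate n).measure_preimage (hB.symmDiff hmB₀).nullMeasurableSet]
    exact hηB
  -- one-sided measure approximations
  have happ : ∀ s t : Set (ℕ → α), μ (s ∆ t) ≤ η → μ s ≤ μ t + η ∧ μ t ≤ μ s + η := by
    intro s t h
    constructor
    · exact (measure_le_of_symmDiff μ).trans (add_le_add_right h _)
    · refine (measure_le_of_symmDiff μ (s := t) (t := s)).trans ?_
      rw [symmDiff_comm]
      exact add_le_add_right h _
  have hmul : ∀ x y x' y' : ENNReal, x ≤ x' + η → y ≤ y' + η → x' ≤ 1 → y' ≤ 1 →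
      x * y ≤ x' * y' + (η + η + η) := by
    intro x y x' y' hx hy hx' hy'
    have e1 : x' * η ≤ η := by
      calc x' * η ≤ 1 * η := mul_le_mul_left hx' η
        _ = η := one_mul η
    have e2 : η * y' ≤ η := by
      calc η * y' ≤ η * 1 := mul_le_mul_right hy' η
        _ = η := mul_one η
    have e3 : η * η ≤ η := by
      calc η * η ≤ η * 1 := mul_le_mul_right hη1 η
        _ = η := mul_one η
    calc x * y ≤ (x' + η) * (y' + η) := mul_le_mul' hx hy
      _ = x' * y' + (x' * η + (η * y' + η * η)) := by ring
      _ ≤ x' * y' + (η + (η + η)) := by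
          exact add_le_add_right (add_le_add e1 (add_le_add e2 e3)) _
      _ = x' * y' + (η + η + η) := by ring
  -- upper bound
  have hupper : μ (A ∩ (shf)^[n] ⁻¹' B) ≤ μ A * μ B + ε := by
    calc μ (A ∩ (shf)^[n] ⁻¹' B)
        ≤ μ (A₀ ∩ (shf)^[n] ⁻¹' B₀) + (μ (A ∆ A₀) + μ (((shf)^[n] ⁻¹' B) ∆ ((shf)^[n] ⁻¹' B₀))) :=
          meas_inter_approx μ _ _ _ _
      _ ≤ μ A₀ * μ B₀ + (η + η) := by
          rw [hprod]
          exact add_le_add_right (add_le_add hηA hshift) _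
      _ ≤ (μ A * μ B + (η + η + η)) + (η + η) := by
          refine add_le_add_left ?_ _
          exact hmul (μ A₀) (μ B₀) (μ A) (μ B) ((happ A A₀ hηA).2) ((happ B B₀ hηB).2)
            prob_le_one prob_le_one
      _ = μ A * μ B + (η + η + η + η + η) := by ring
      _ ≤ μ A * μ B + ε := add_le_add_right h5η _
  -- lower bound
  have hlower : μ A * μ B ≤ μ (A ∩ (shf)^[n] ⁻¹' B) + ε := by
    calc μ A * μ B ≤ μ A₀ * μ B₀ + (η + η + η) := by
          refine hmul (μ A) (μ B) (μ A₀) (μ B₀) ((happ A A₀ hηA).1) ((happ B B₀ hηB).1)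
            prob_le_one prob_le_one
      _ = μ (A₀ ∩ (shf)^[n] ⁻¹' B₀) + (η + η + η) := by rw [hprod]
      _ ≤ (μ (A ∩ (shf)^[n] ⁻¹' B) + (μ (A₀ ∆ A) + μ (((shf)^[n] ⁻¹' B₀) ∆ ((shf)^[n] ⁻¹' B))))
            + (η + η + η) := add_le_add_left (meas_inter_approx μ _ _ _ _) _
      _ ≤ (μ (A ∩ (shf)^[n] ⁻¹' B) + (η + η)) + (η + η + η) := by
          refine add_le_add_left (add_le_add_right (add_le_add ?_ ?_) _) _
          · rw [symmDiff_comm]; exact hηA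
          · rw [symmDiff_comm]; exact hshift
      _ = μ (A ∩ (shf)^[n] ⁻¹' B) + (η + η + η + η + η) := by ring
      _ ≤ μ (A ∩ (shf)^[n] ⁻¹' B) + ε := add_le_add_right h5η _
  exact ⟨tsub_le_iff_right.mpr hlower, hupper⟩

end PeyriereAux

/-- The cylinder set determined by `n` consecutive blocks of length `N`. -/
def blockCyl (m N : ℕ) {n : ℕ} (I : Fin n → (Fin N → Fin m)) : Set (ℕ → Fin m) :=
  {y | ∀ (k : Fin n) (i : Fin N), y ((k : ℕ) * N + (i : ℕ)) = I k i}

/-- The atom of the partition `Γ` (determined by the first `N` coordinates, encoded by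
the labeling `γ`) with label `a`. -/
def gammaAtom (m N g : ℕ) (γ : (Fin N → Fin m) → Fin g) (a : Fin g) :
    Set (ℕ → Fin m) :=
  {y | γ (fun i : Fin N => y (i : ℕ)) = a}

/-- The skew shift `T(ω, x) = (Tω, Tx)` on `Ω × Λ^ℕ`, where both factors are shifted by
one block (`Tω` the shift on `Ω = Γ^ℕ`, `Tx = σ^N x`). -/
def skewShift (m N g : ℕ) (q : (ℕ → Fin g) × (ℕ → Fin m)) :
    (ℕ → Fin g) × (ℕ → Fin m) :=
  (fun k => q.1 (k + 1), fun i => q.2 (i + N))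


namespace PeyriereAux

/-- grouping a pair (ω, x) into a single sequence of (symbol, block) pairs -/
def blockEquiv (m N g : ℕ) (hN : 0 < N) :
    ((ℕ → Fin g) × (ℕ → Fin m)) ≃ᵐ (ℕ → Fin g × (Fin N → Fin m)) where
  toFun q := fun k => (q.1 k, fun i => q.2 (k * N + (i : ℕ)))
  invFun y := (fun k => (y k).1, fun j => (y (j / N)).2 ⟨j % N, Nat.mod_lt j hN⟩)
  left_inv q := by
    refine Prod.ext ?_ ?_ <;> funext j
    · rfl
    · show q.2 ((j / N) * N + (j % N)) = q.2 j
      rw [Nat.mul_comm (j / N) N, Nat.div_add_mod]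
  right_inv y := by
    funext k
    refine Prod.ext rfl ?_
    funext i
    have hdiv : (k * N + (i : ℕ)) / N = k := by
      rw [Nat.mul_comm k N, Nat.mul_add_div hN, Nat.div_eq_of_lt i.2, Nat.add_zero]
    have hmod : (k * N + (i : ℕ)) % N = (i : ℕ) := by
      rw [Nat.mul_comm k N, Nat.mul_add_mod, Nat.mod_eq_of_lt i.2]
    show (y ((k * N + (i : ℕ)) / N)).2 ⟨(k * N + (i : ℕ)) % N, _⟩ = (y k).2 i
    simp only [hdiv]
    exact congrArg (y k).2 (Fin.ext hmod)
  measurable_toFun := by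
    apply measurable_pi_lambda
    intro k
    exact Measurable.prodMk ((measurable_pi_apply k).comp measurable_fst)
      (measurable_pi_lambda _ fun i => (measurable_pi_apply _).comp measurable_snd)
  measurable_invFun := by
    refine Measurable.prodMk ?_ ?_
    · exact measurable_pi_lambda _ fun k => measurable_fst.comp (measurable_pi_apply k)
    · exact measurable_pi_lambda _ fun j =>
        ((measurable_pi_apply _).comp measurable_snd).comp (measurable_pi_apply _)

end PeyriereAux

namespace PeyriereAux

/-- the weight function on the product alphabet -/
def pw (m N g : ℕ) (γ : (Fin N → Fin m) → Fin g) (β : Measure (ℕ → Fin m)) :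
    Fin g × (Fin N → Fin m) → ENNReal :=
  fun a => β (blockCyl m N (fun _ : Fin 1 => a.2) ∩ gammaAtom m N g γ a.1)

end PeyriereAux

open PeyriereAux in
/-- The Peyrière-type measure `Q = ∫ δ_ω × β^ω dP(ω)` on `Ω × Λ^ℕ` (characterized on
rectangles by `Q([U] × [I]) = ∏_k β([I_k] ∩ Γ-atom(U_k))`) is invariant and mixing for
`T(ω, x) = (Tω, Tx)`. -/
theorem peyriere_measure_invariant_mixing
    (m N g : ℕ) [NeZero m] [NeZero g] (hN : 0 < N)
    (γ : (Fin N → Fin m) → Fin g)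
    (p : Fin m → ENNReal) (hp : ∑ i, p i = 1)
    (β : Measure (ℕ → Fin m)) [MeasureTheory.IsProbabilityMeasure β]
    (hβ : ∀ (n : ℕ) (I : Fin n → Fin m),
      β {x | ∀ k : Fin n, x (k : ℕ) = I k} = ∏ k, p (I k))
    (Q : Measure ((ℕ → Fin g) × (ℕ → Fin m)))
    [MeasureTheory.IsProbabilityMeasure Q]
    (hQ : ∀ (n : ℕ) (U : Fin n → Fin g) (I : Fin n → (Fin N → Fin m)),
      Q ({ω | ∀ k : Fin n, ω (k : ℕ) = U k} ×ˢ blockCyl m N I) =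
        ∏ k, β (blockCyl m N (fun _ : Fin 1 => I k) ∩ gammaAtom m N g γ (U k))) :
    MeasurePreserving (skewShift m N g) Q Q ∧
      ∀ A B : Set ((ℕ → Fin g) × (ℕ → Fin m)), MeasurableSet A → MeasurableSet B →
        Tendsto (fun n : ℕ => Q (A ∩ (skewShift m N g)^[n] ⁻¹' B)) atTop
          (𝓝 (Q A * Q B)) := by
  classical
  set E := PeyriereAux.blockEquiv m N g hN with hE
  set μ : Measure (ℕ → Fin g × (Fin N → Fin m)) := Q.map E with hμdef
  have hprob : IsProbabilityMeasure μ := Measure.isProbabilityMeasure_map E.measurable.aemeasurable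
  have hEapp : ∀ (q : (ℕ → Fin g) × (ℕ → Fin m)) (k : ℕ),
      E q k = (q.1 k, fun i : Fin N => q.2 (k * N + (i : ℕ))) := fun q k => rfl
  have hpre : ∀ (n : ℕ) (I : Fin n → Fin g × (Fin N → Fin m)),
      ⇑E ⁻¹' (cyl I) =
        {ω : ℕ → Fin g | ∀ k : Fin n, ω (k : ℕ) = (I k).1} ×ˢ
          blockCyl m N (fun k => (I k).2) := by
    intro n I
    ext q
    simp only [Set.mem_preimage, cyl, Set.mem_setOf_eq, Set.mem_prod, blockCyl]
    constructor
    · intro h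
      refine ⟨fun k => ?_, fun k i => ?_⟩
      · have := h k; rw [hEapp] at this
        exact congrArg Prod.fst this
      · have := h k; rw [hEapp] at this
        exact congrFun (congrArg Prod.snd this) i
    · rintro ⟨h1, h2⟩ k
      rw [hEapp]
      exact Prod.ext (h1 k) (funext fun i => h2 k i)
  have hμcyl : ∀ (n : ℕ) (I : Fin n → Fin g × (Fin N → Fin m)),
      μ (cyl I) = ∏ k, pw m N g γ β (I k) := by
    intro n I
    rw [hμdef, MeasurableEquiv.map_apply, hpre n I,
      hQ n (fun k => (I k).1) (fun k => (I k).2)]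
    simp [pw]
  have hconj : ∀ q, E (skewShift m N g q) = shf (E q) := by
    intro q
    funext k
    rw [hEapp]
    show _ = E q (k + 1)
    rw [hEapp]
    refine Prod.ext rfl ?_
    funext i
    show q.2 (k * N + (i : ℕ) + N) = q.2 ((k + 1) * N + (i : ℕ))
    congr 1
    ring
  have hconj_iter : ∀ (n : ℕ) q,
      (skewShift m N g)^[n] q = E.symm ((shf)^[n] (E q)) := by
    intro n
    induction n with
    | zero => intro q; simp
    | succ n ih =>
      intro q
      rw [Function.iterate_succ_apply', Function.iterate_succ_apply', ih]
      have hc := hconj (E.symm ((shf)^[n] (E q)))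
      rw [MeasurableEquiv.apply_symm_apply] at hc
      rw [← hc, MeasurableEquiv.symm_apply_apply]
  have hSmp : MeasurePreserving (shf) μ μ := shf_measurePreserving _ μ hμcyl
  have hEmp : MeasurePreserving (⇑E) Q μ := ⟨E.measurable, hμdef.symm⟩
  constructor
  · have hcomp : skewShift m N g = ⇑E.symm ∘ shf ∘ ⇑E := by
      funext q
      calc skewShift m N g q = E.symm (E (skewShift m N g q)) :=
            (E.symm_apply_apply _).symm
        _ = E.symm (shf (E q)) := by rw [hconj q]
    rw [hcomp]
    exact (MeasurePreserving.symm E hEmp).comp (hSmp.comp hEmp)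
  · intro A B hA hB
    have hA' : MeasurableSet (⇑E.symm ⁻¹' A) := E.symm.measurable hA
    have hB' : MeasurableSet (⇑E.symm ⁻¹' B) := E.symm.measurable hB
    have hQA : Q A = μ (⇑E.symm ⁻¹' A) := by
      rw [hμdef, MeasurableEquiv.map_apply]
      congr 1
      ext q
      simp
    have hQB : Q B = μ (⇑E.symm ⁻¹' B) := by
      rw [hμdef, MeasurableEquiv.map_apply]
      congr 1
      ext q
      simp
    have hkey : ∀ n : ℕ, Q (A ∩ (skewShift m N g)^[n] ⁻¹' B)
        = μ ((⇑E.symm ⁻¹' A) ∩ (shf)^[n] ⁻¹' (⇑E.symm ⁻¹' B)) := by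
      intro n
      rw [hμdef, MeasurableEquiv.map_apply]
      congr 1
      ext q
      simp only [Set.mem_inter_iff, Set.mem_preimage, MeasurableEquiv.symm_apply_apply]
      rw [hconj_iter n q]
    simp only [hkey, hQA, hQB]
    exact shf_mixing _ μ hμcyl hA' hB'
end
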